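/- arXiv:2009.03676 — 2 statements merged into one kernel-verified Lean document; each statement's English description precedes it below -/
import Mathlib

section
/- A commutative loop satisfying the Osborn identity x(yz·x) = (x^λ\y)·(zx) is a commutative Moufang loop. -/
/-- A quasigroup: a magma with left and right division. -/
class Quasigroup (Q : Type*) extends Mul Q where
  ldiv : Q → Q → Q
  rdiv : Q → Q → Q
  mul_ldiv : ∀ a b : Q, a * ldiv a b = b
  ldiv_mul : ∀ a b : Q, ldiv a (a * b) = b
  rdiv_mul : ∀ a b : Q, rdiv a b * b = a
  mul_rdiv : ∀ a b : Q, rdiv (a * b) b = a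

/-- A loop: a quasigroup with a two-sided identity. -/
class Loop (Q : Type*) extends Quasigroup Q, One Q where
  one_mul : ∀ a : Q, 1 * a = a
  mul_one : ∀ a : Q, a * 1 = a

open Quasigroup

/-- Left translation `L_a : y ↦ a·y` as a permutation. -/
def lt {Q : Type*} [Quasigroup Q] (a : Q) : Equiv.Perm Q :=
  ⟨(a * ·), ldiv a, fun b => ldiv_mul a b, fun b => mul_ldiv a b⟩

/-- Right translation `R_a : y ↦ y·a` as a permutation. -/
def rt {Q : Type*} [Quasigroup Q] (a : Q) : Equiv.Perm Q :=
  ⟨(· * a), fun b => rdiv b a, fun b => mul_rdiv b a, fun b => rdiv_mul b a⟩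

/-- The multiplication group: generated by all left and right translations. -/
def MultGroup (Q : Type*) [Quasigroup Q] : Subgroup (Equiv.Perm Q) :=
  Subgroup.closure (Set.range (lt (Q := Q)) ∪ Set.range (rt (Q := Q)))

/-- The left inverse `x^λ` (satisfying `x^λ * x = 1`). -/
def lam {Q : Type*} [Loop Q] (x : Q) : Q := rdiv 1 x

/-- The right inverse `x^ρ` (satisfying `x * x^ρ = 1`). -/
def rinv {Q : Type*} [Loop Q] (x : Q) : Q := ldiv x 1

/-!
Putting `z = 1` in the Osborn identity gives `x (y x) = (x^λ \ y) x`; by commutativity both sides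
are left multiples of `x`, so cancelling `x` yields `x^λ \ y = x y`. The Osborn identity then reads
`x (y z · x) = (x y)(z x)`, and commutativity rewrites its left side as `(x · y z) x`.
-/

theorem Quasigroup.mul_left_cancel {Q : Type*} [Quasigroup Q] {x a b : Q} (h : x * a = x * b) :
    a = b := by
  rw [← ldiv_mul x a, h, ldiv_mul]

theorem ldiv_lam_eq_mul {Q : Type*} [Loop Q]
    (hOs : ∀ x y : Q, x * (y * x) = ldiv (lam x) y * x)
    (hcomm : ∀ x y : Q, x * y = y * x) (x y : Q) :
    ldiv (lam x) y = x * y := by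
  refine (mul_left_cancel (x := x) ?_).symm
  rw [hcomm x (ldiv (lam x) y), ← hOs, hcomm y x]

theorem stmt9 (Q : Type*) [Loop Q]
    (hOs : ∀ x y z : Q, x * ((y * z) * x) = Quasigroup.ldiv (lam x) y * (z * x))
    (hcomm : ∀ x y : Q, x * y = y * x) :
    ∀ x y z : Q, (x * y) * (z * x) = (x * (y * z)) * x := by
  have hldiv : ∀ x y : Q, Quasigroup.ldiv (lam x) y = x * y :=
    ldiv_lam_eq_mul (fun x y => by simpa only [Loop.mul_one, Loop.one_mul] using hOs x y 1) hcomm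
  intro x y z
  rw [← hldiv x y, ← hOs, hcomm (y * z) x, hcomm (x * (y * z)) x]
end

section
/- In a universal Osborn loop Q, the identity z = x·({[x\(zx)]/x · x^λ}·x) holds for all x, z ∈ Q. Equivalently, the permutation R_x L_x^{-1} R_x^{-1} R_{x^λ} R_x L_x is the identity map. -/
open Quasigroup

/-!
Put `y = [x\(zx)]/x`, so that `x·(yx) = zx`. Specialising the Osborn identity at `z = 1` gives
`x·(yx) = (x^λ\y)·x`, hence `x^λ\y = z` by right cancellation; specialising it at `z = x^λ` gives
`x·((y·x^λ)·x) = x^λ\y`.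
-/

theorem Quasigroup.mul_right_cancel {Q : Type*} [Quasigroup Q] {a b x : Q} (h : a * x = b * x) :
    a = b := by
  rw [← mul_rdiv a x, h, mul_rdiv]

theorem lam_mul_self {Q : Type*} [Loop Q] (x : Q) : lam x * x = 1 :=
  rdiv_mul 1 x

section Osborn

variable {Q : Type*} [Loop Q]
  (hOs : ∀ x y z : Q, x * ((y * z) * x) = ldiv (lam x) y * (z * x))
include hOs

theorem osborn_mul_mul_self (x y : Q) : x * (y * x) = ldiv (lam x) y * x := by
  simpa only [Loop.mul_one, Loop.one_mul] using hOs x y 1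

theorem osborn_mul_lam_mul (x y : Q) : x * ((y * lam x) * x) = ldiv (lam x) y := by
  simpa only [lam_mul_self, Loop.mul_one] using hOs x y (lam x)

theorem osborn_eq_mul_rdiv_ldiv (x z : Q) :
    z = x * ((rdiv (ldiv x (z * x)) x * lam x) * x) := by
  set y := rdiv (ldiv x (z * x)) x
  have hy : x * (y * x) = z * x := by rw [rdiv_mul, mul_ldiv]
  have hz : ldiv (lam x) y = z :=
    Quasigroup.mul_right_cancel ((osborn_mul_mul_self hOs x y).symm.trans hy)
  rw [osborn_mul_lam_mul hOs, hz]

end Osborn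

theorem stmt16_general (Q : Type*) [Loop Q]
    (hOs : ∀ x y z : Q, x * ((y * z) * x) = Quasigroup.ldiv (lam x) y * (z * x)) :
    (∀ x z : Q,
      z = x * ((Quasigroup.rdiv (Quasigroup.ldiv x (z * x)) x * lam x) * x)) ∧
    (∀ x : Q,
      (rt x).trans ((lt x).symm.trans ((rt x).symm.trans ((rt (lam x)).trans
        ((rt x).trans (lt x))))) = Equiv.refl Q) := by
  refine ⟨osborn_eq_mul_rdiv_ldiv hOs, fun x => Equiv.ext fun z => ?_⟩
  exact (osborn_eq_mul_rdiv_ldiv hOs x z).symm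

theorem stmt16 (Q : Type*) [Loop Q]
    (hOs : ∀ x y z : Q, x * ((y * z) * x) = Quasigroup.ldiv (lam x) y * (z * x))
    (hU : ∀ u v : Q,
      -- the u,v-principal isotope multiplication, left division and left inverse
      (fun mul' ldiv' lam' =>
        ∀ x y z : Q, mul' x (mul' (mul' y z) x) = mul' (ldiv' (lam' x) y) (mul' z x))
      (fun a b : Q => Quasigroup.rdiv a v * Quasigroup.ldiv u b)
      (fun a b : Q => u * Quasigroup.ldiv (Quasigroup.rdiv a v) b)
      (fun a : Q => Quasigroup.rdiv (u * v) (Quasigroup.ldiv u a) * v)) :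
    (∀ x z : Q,
      z = x * ((Quasigroup.rdiv (Quasigroup.ldiv x (z * x)) x * lam x) * x)) ∧
    (∀ x : Q,
      (rt x).trans ((lt x).symm.trans ((rt x).symm.trans ((rt (lam x)).trans
        ((rt x).trans (lt x))))) = Equiv.refl Q) :=
  stmt16_general Q hOs
end
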